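/- Let r be a positive even integer, r' = r/2 + 1, and let P = {p_1,…,p_{r'}}, Q = {q_1,…,q_{r'}} ⊆ [n] with p_1 < q_1 < p_2 < q_2 < ⋯ < p_{r'} < q_{r'}, and X ⊆ [n]∖(P∪Q). Let a ∈ [n]∖(X∪P∪Q) with a > p_1, and set Y := X∪Q∪{a}. Then Y and X∪S are weakly r-separated for every S ∈ N↑(P,Q), while Y and X∪P are not weakly r-separated. -/

import Mathlib

/-
Write `T := Q ∪ {a}`, so that `Y = X ∪ T`. The common part `X` is irrelevant: weak separation only
sees `A ∖ B`, `B ∖ A` and `|A| - |B|`, so `Y` is compared with `X ∪ S` exactly as `T` is with `S`.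
Every `S ∈ N↑(P,Q)` shares an element of `Q` with `T`, hence
`alt(T,S) ≤ |T ∖ S| + |S ∖ T| ≤ |T| + |S| - 2 ≤ r + 2`, with equality only if `|T| = |S|`; then the
cardinality condition holds whichever of the two sets surrounds the other from the right.
Against `P`, the chain `p₁ < q₁ < ⋯ < p_{r'} < q_{r'}` alternates between `P ∖ T` and `T ∖ P`, so
`alt(T,P) ≥ r + 2`; but `|T| > |P|`, and `max T ≥ q_{r'} > max P` forbids `P` surrounding `T` from
the right.
-/

open Finset

/-- An alternating sequence for the pair of sets `A`, `B`: a strictly increasing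
sequence whose odd-position elements lie in one of `A \ B`, `B \ A` and whose
even-position elements lie in the other. -/
def IsAltSeq (A B : Finset ℕ) {m : ℕ} (f : Fin m → ℕ) : Prop :=
  StrictMono f ∧
    ((∀ j : Fin m, (j : ℕ) % 2 = 0 → f j ∈ A \ B) ∧
        (∀ j : Fin m, (j : ℕ) % 2 = 1 → f j ∈ B \ A) ∨
      (∀ j : Fin m, (j : ℕ) % 2 = 0 → f j ∈ B \ A) ∧
        (∀ j : Fin m, (j : ℕ) % 2 = 1 → f j ∈ A \ B))

/-- `altLen A B` is the maximum length of an alternating sequence for `A`, `B`. -/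
noncomputable def altLen (A B : Finset ℕ) : ℕ :=
  sSup {m : ℕ | ∃ f : Fin m → ℕ, IsAltSeq A B f}

/-- `A` surrounds `B`:  `min (A \ B) < min (B \ A)` and `max (B \ A) < max (A \ B)`. -/
def Surrounds (A B : Finset ℕ) : Prop :=
  (A \ B).min < (B \ A).min ∧ (B \ A).max < (A \ B).max

/-- Weak `r`-separation for an odd `r`. -/
def WeaklySep (r : ℕ) (A B : Finset ℕ) : Prop :=
  altLen A B ≤ r + 2 ∧
    (altLen A B = r + 2 →
      Surrounds A B ∧ A.card ≤ B.card ∨ Surrounds B A ∧ B.card ≤ A.card)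

/-- `A` surrounds `B` from the right: `max (B \ A) < max (A \ B)`. -/
def SurroundsRight (A B : Finset ℕ) : Prop :=
  (B \ A).max < (A \ B).max

/-- Weak `r`-separation for an even `r`. -/
def WeaklySepE (r : ℕ) (A B : Finset ℕ) : Prop :=
  altLen A B ≤ r + 2 ∧
    (altLen A B = r + 2 →
      SurroundsRight A B ∧ A.card ≤ B.card ∨ SurroundsRight B A ∧ B.card ≤ A.card)

section AltLen

variable {A B : Finset ℕ}

lemma IsAltSeq.length_le_card {m : ℕ} {f : Fin m → ℕ} (h : IsAltSeq A B f) :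
    m ≤ #(A \ B) + #(B \ A) := by
  obtain ⟨hmono, hpar⟩ := h
  have hmem : ∀ j, f j ∈ (A \ B) ∪ (B \ A) := by
    intro j
    rcases Nat.mod_two_eq_zero_or_one (j : ℕ) with hj | hj <;>
      rcases hpar with ⟨h0, h1⟩ | ⟨h0, h1⟩ <;> simp_all
  calc m = #(univ : Finset (Fin m)) := (card_fin m).symm
    _ ≤ #((A \ B) ∪ (B \ A)) :=
        card_le_card_of_injOn f (fun j _ => hmem j) hmono.injective.injOn
    _ ≤ #(A \ B) + #(B \ A) := card_union_le _ _

lemma bddAbove_altLen_set (A B : Finset ℕ) :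
    BddAbove {m : ℕ | ∃ f : Fin m → ℕ, IsAltSeq A B f} :=
  ⟨#(A \ B) + #(B \ A), fun _ ⟨_, hf⟩ => hf.length_le_card⟩

lemma IsAltSeq.le_altLen {m : ℕ} {f : Fin m → ℕ} (h : IsAltSeq A B f) : m ≤ altLen A B :=
  le_csSup (bddAbove_altLen_set A B) ⟨f, h⟩

lemma altLen_le_card_sdiff_add_card_sdiff (A B : Finset ℕ) :
    altLen A B ≤ #(A \ B) + #(B \ A) :=
  csSup_le ⟨0, Fin.elim0, fun i => i.elim0, Or.inl ⟨fun j => j.elim0, fun j => j.elim0⟩⟩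
    fun _ ⟨_, hf⟩ => hf.length_le_card

lemma isAltSeq_comm {m : ℕ} {f : Fin m → ℕ} : IsAltSeq A B f ↔ IsAltSeq B A f :=
  and_congr_right' or_comm

lemma altLen_comm (A B : Finset ℕ) : altLen A B = altLen B A := by
  simp only [altLen, isAltSeq_comm (A := A)]

end AltLen

lemma union_sdiff_union_of_disjoint {α : Type*} [DecidableEq α] {X A : Finset α} (B : Finset α)
    (h : Disjoint X A) : (X ∪ A) \ (X ∪ B) = A \ B := by
  ext x
  have : x ∈ X → x ∉ A := fun hx => disjoint_left.1 h hx
  simp only [mem_sdiff, mem_union]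
  tauto

section UnionCancel

variable {X A B : Finset ℕ}

lemma altLen_union_union (hA : Disjoint X A) (hB : Disjoint X B) :
    altLen (X ∪ A) (X ∪ B) = altLen A B := by
  simp only [altLen, IsAltSeq, union_sdiff_union_of_disjoint _ hA,
    union_sdiff_union_of_disjoint _ hB]

lemma surroundsRight_union_union_iff (hA : Disjoint X A) (hB : Disjoint X B) :
    SurroundsRight (X ∪ A) (X ∪ B) ↔ SurroundsRight A B := by
  simp only [SurroundsRight, union_sdiff_union_of_disjoint _ hA, union_sdiff_union_of_disjoint _ hB]

lemma weaklySepE_union_union_iff {r : ℕ} (hA : Disjoint X A) (hB : Disjoint X B) :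
    WeaklySepE r (X ∪ A) (X ∪ B) ↔ WeaklySepE r A B := by
  simp only [WeaklySepE, altLen_union_union hA hB, surroundsRight_union_union_iff hA hB,
    surroundsRight_union_union_iff hB hA, card_union_of_disjoint hA, card_union_of_disjoint hB,
    Nat.add_le_add_iff_left]

end UnionCancel

section Separation

variable {A B : Finset ℕ}

lemma surroundsRight_or_surroundsRight_of_ne (h : A ≠ B) :
    SurroundsRight A B ∨ SurroundsRight B A := by
  refine lt_or_gt_of_ne fun heq => ?_
  rcases (A \ B).eq_empty_or_nonempty with hAB | ⟨x, hx⟩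
  · rw [hAB, max_empty, Finset.max_eq_bot] at heq
    exact h (Subset.antisymm (sdiff_eq_empty_iff_subset.1 hAB) (sdiff_eq_empty_iff_subset.1 heq))
  · obtain ⟨y, hy⟩ := max_of_mem hx
    exact disjoint_left.1 disjoint_sdiff_sdiff (mem_of_max hy) (mem_of_max (heq.trans hy))

lemma weaklySepE_of_card_eq {r : ℕ} (hne : A ≠ B) (hcard : #A = #B)
    (h : #(A \ B) + #(B \ A) ≤ r + 2) : WeaklySepE r A B :=
  ⟨(altLen_le_card_sdiff_add_card_sdiff A B).trans h, fun _ =>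
    (surroundsRight_or_surroundsRight_of_ne hne).imp (⟨·, hcard.le⟩) (⟨·, hcard.ge⟩)⟩

lemma weaklySepE_of_card_sdiff_lt {r : ℕ} (h : #(A \ B) + #(B \ A) < r + 2) :
    WeaklySepE r A B := by
  have := altLen_le_card_sdiff_add_card_sdiff A B
  exact ⟨by omega, fun _ => by omega⟩

lemma card_sdiff_add_card_sdiff_add_two_le {b : ℕ} (hA : b ∈ A) (hB : b ∈ B) :
    #(A \ B) + #(B \ A) + 2 ≤ #A + #B := by
  have hinter : 0 < #(A ∩ B) := card_pos.2 ⟨b, mem_inter.2 ⟨hA, hB⟩⟩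
  have := card_sdiff_add_card_inter A B
  have := card_sdiff_add_card_inter B A
  rw [inter_comm] at this
  omega

end Separation

def Interleaved {α : Type*} [Preorder α] {m : ℕ} (p q : Fin m → α) : Prop :=
  (∀ i, p i < q i) ∧ ∀ i j, i < j → q i < p j

def interleave {α : Type*} {m : ℕ} (p q : Fin m → α) (j : Fin (2 * m)) : α :=
  if (j : ℕ) % 2 = 0 then p ⟨j / 2, Nat.div_lt_of_lt_mul j.isLt⟩
  else q ⟨j / 2, Nat.div_lt_of_lt_mul j.isLt⟩

namespace Interleaved

variable {α : Type*} [Preorder α] {m : ℕ} {p q : Fin m → α}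

lemma strictMono_left (h : Interleaved p q) : StrictMono p :=
  fun i j hij => (h.1 i).trans (h.2 i j hij)

lemma strictMono_right (h : Interleaved p q) : StrictMono q :=
  fun i j hij => (h.2 i j hij).trans (h.1 j)

lemma disjoint_image [DecidableEq α] (h : Interleaved p q) :
    Disjoint (univ.image p) (univ.image q) := by
  simp only [disjoint_left, mem_image, mem_univ, true_and, not_exists]
  rintro _ ⟨i, rfl⟩ j hj
  rcases le_or_gt i j with hij | hij
  · exact ((h.1 i).trans_le (h.strictMono_right.monotone hij)).ne' hj
  · exact (h.2 j i hij).ne hj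

lemma card_image_left [DecidableEq α] (h : Interleaved p q) : #(univ.image p) = m := by
  rw [card_image_of_injective _ h.strictMono_left.injective, card_univ, Fintype.card_fin]

lemma card_image_right [DecidableEq α] (h : Interleaved p q) : #(univ.image q) = m := by
  rw [card_image_of_injective _ h.strictMono_right.injective, card_univ, Fintype.card_fin]

lemma strictMono_interleave (h : Interleaved p q) : StrictMono (interleave p q) := by
  intro i j hij
  have hij : (i : ℕ) < j := hij
  unfold interleave
  split_ifs
  · exact h.strictMono_left (Fin.mk_lt_mk.2 (by omega))
  · exact (h.1 _).trans_le (h.strictMono_right.monotone (Fin.mk_le_mk.2 (by omega)))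
  · exact h.2 _ _ (Fin.mk_lt_mk.2 (by omega))
  · exact h.strictMono_right (Fin.mk_lt_mk.2 (by omega))

end Interleaved

lemma Interleaved.two_mul_le_altLen {A B : Finset ℕ} {m : ℕ} {p q : Fin m → ℕ}
    (h : Interleaved p q) (hp : ∀ i, p i ∈ A \ B) (hq : ∀ i, q i ∈ B \ A) :
    2 * m ≤ altLen A B :=
  IsAltSeq.le_altLen ⟨h.strictMono_interleave,
    Or.inl ⟨fun j hj => by simp only [interleave, hj, if_true, hp],
      fun j hj => by simp only [interleave, hj, one_ne_zero, if_false, hq]⟩⟩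

section Witness

variable {r : ℕ} {P Q : Finset ℕ} {a b : ℕ}

lemma weaklySepE_insert_insert (haQ : a ∉ Q) (haP : a ∉ P) (hbQ : b ∈ Q) (hbP : b ∉ P)
    (hcard : #Q = #P) (hr : 2 * #P = r + 2) : WeaklySepE r (insert a Q) (insert b P) := by
  have hab : a ≠ b := fun hab => haQ (hab ▸ hbQ)
  have hbound := card_sdiff_add_card_sdiff_add_two_le (A := insert a Q) (mem_insert_of_mem hbQ)
    (mem_insert_self b P)
  rw [card_insert_of_notMem haQ, card_insert_of_notMem hbP] at hbound
  refine weaklySepE_of_card_eq (fun h => ?_) ?_ (by omega)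
  · have ha : a ∈ insert b P := h ▸ mem_insert_self a Q
    simp [hab, haP] at ha
  · rw [card_insert_of_notMem haQ, card_insert_of_notMem hbP, hcard]

lemma weaklySepE_insert_insert_erase (haQ : a ∉ Q) (hbQ : b ∈ Q) (hbP : b ∉ P) {c : ℕ}
    (hcP : c ∈ P) (hcard : #Q = #P) (hr : 2 * #P = r + 2) :
    WeaklySepE r (insert a Q) (insert b (P.erase c)) := by
  have hbound := card_sdiff_add_card_sdiff_add_two_le (A := insert a Q) (mem_insert_of_mem hbQ)
    (mem_insert_self b (P.erase c))
  rw [card_insert_of_notMem haQ, card_insert_of_notMem fun h => hbP (mem_of_mem_erase h),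
    card_erase_of_mem hcP] at hbound
  have : 0 < #P := card_pos.2 ⟨c, hcP⟩
  exact weaklySepE_of_card_sdiff_lt (by omega)

lemma not_weaklySepE_insert_image {m : ℕ} {p q : Fin (m + 1) → ℕ} (h : Interleaved p q)
    (haP : a ∉ univ.image p) (haQ : a ∉ univ.image q) (hr : r = 2 * m) :
    ¬ WeaklySepE r (insert a (univ.image q)) (univ.image p) := by
  have hpP (i) : p i ∈ univ.image p \ insert a (univ.image q) := by
    have hi := mem_image_of_mem p (mem_univ i)
    simp only [mem_sdiff, mem_insert, not_or]
    exact ⟨hi, fun hia => haP (hia ▸ hi), disjoint_left.1 h.disjoint_image hi⟩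
  have hqQ (i) : q i ∈ insert a (univ.image q) \ univ.image p :=
    have hi := mem_image_of_mem q (mem_univ i)
    mem_sdiff.2 ⟨mem_insert_of_mem hi, disjoint_right.1 h.disjoint_image hi⟩
  have halt : r + 2 ≤ altLen (insert a (univ.image q)) (univ.image p) := by
    rw [altLen_comm]
    have := h.two_mul_le_altLen hpP hqQ
    omega
  rintro ⟨hle, hsep⟩
  rcases hsep (le_antisymm hle halt) with ⟨-, hcard⟩ | ⟨hsurr, -⟩
  · rw [card_insert_of_notMem haQ, h.card_image_left, h.card_image_right] at hcard
    omega
  · have hmaxP : (univ.image p \ insert a (univ.image q)).max ≤ p (Fin.last m) :=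
      Finset.max_le fun x hx => by
        obtain ⟨i, -, rfl⟩ := mem_image.1 (mem_sdiff.1 hx).1
        exact WithBot.coe_le_coe.2 (h.strictMono_left.monotone (Fin.le_last i))
    exact hsurr.not_ge <|
      hmaxP.trans ((WithBot.coe_lt_coe.2 (h.1 _)).le.trans (le_max (hqQ (Fin.last m))))

end Witness

theorem even_witness_Y_general (r n : ℕ) (hr : Even r)
    (p q : Fin (r / 2 + 1) → ℕ)
    (hpq : ∀ i, p i < q i)
    (hqp : ∀ i j : Fin (r / 2 + 1), i < j → q i < p j)
    (P Q : Finset ℕ)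
    (hP : P = Finset.image p Finset.univ) (hQ : Q = Finset.image q Finset.univ)
    (X : Finset ℕ) (hX : X ⊆ Finset.Icc 1 n \ (P ∪ Q))
    (a : ℕ) (haX : a ∉ X ∪ P ∪ Q)
    (Y : Finset ℕ) (hY : Y = insert a (X ∪ Q)) :
    (∀ S : Finset ℕ,
      ((∃ b ∈ Q, S = insert b P) ∨ ∃ a' ∈ P, ∃ b ∈ Q, S = insert b (P.erase a')) →
      WeaklySepE r Y (X ∪ S)) ∧
    ¬ WeaklySepE r Y (X ∪ P) := by
  have hpq' : Interleaved p q := ⟨hpq, hqp⟩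
  have hrm : r = 2 * (r / 2) := (Nat.two_mul_div_two_of_even hr).symm
  have hXPQ : Disjoint X (P ∪ Q) := disjoint_of_subset_left hX sdiff_disjoint
  simp only [mem_union, not_or] at haX
  obtain ⟨⟨haX, haP⟩, haQ⟩ := haX
  have hXT : Disjoint X (insert a Q) :=
    disjoint_insert_right.2 ⟨haX, hXPQ.mono_right subset_union_right⟩
  have hbP {b} (hbQ : b ∈ Q) : b ∉ P := disjoint_right.1 (hP ▸ hQ ▸ hpq'.disjoint_image) hbQ
  have hcard : #Q = #P := by rw [hP, hQ, hpq'.card_image_left, hpq'.card_image_right]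
  have hPcard : 2 * #P = r + 2 := by rw [hP, hpq'.card_image_left]; omega
  rw [hY, ← union_insert]
  refine ⟨?_, ?_⟩
  · rintro S (⟨b, hbQ, rfl⟩ | ⟨c, hcP, b, hbQ, rfl⟩)
    · rw [weaklySepE_union_union_iff hXT <| hXPQ.mono_right <|
        insert_subset (mem_union_right _ hbQ) subset_union_left]
      exact weaklySepE_insert_insert haQ haP hbQ (hbP hbQ) hcard hPcard
    · rw [weaklySepE_union_union_iff hXT <| hXPQ.mono_right <|
        insert_subset (mem_union_right _ hbQ) ((erase_subset c P).trans subset_union_left)]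
      exact weaklySepE_insert_insert_erase haQ hbQ (hbP hbQ) hcP hcard hPcard
  · rw [weaklySepE_union_union_iff hXT (hXPQ.mono_right subset_union_left)]
    subst hP hQ
    exact not_weaklySepE_insert_image hpq' haP haQ hrm

/-- for even r, the set Y = X ∪ Q ∪ {a} (with
a ∈ [n] ∖ (X ∪ P ∪ Q), a > p₁) is weakly r-separated from X ∪ S for every
upper neighbor S ∈ N↑(P,Q), but not from X ∪ P. -/
theorem even_witness_Y (r n : ℕ) (hr : Even r) (hrpos : 0 < r)
    (p q : Fin (r / 2 + 1) → ℕ)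
    (hp : ∀ i, p i ∈ Finset.Icc 1 n) (hq : ∀ i, q i ∈ Finset.Icc 1 n)
    (hpq : ∀ i, p i < q i)
    (hqp : ∀ i j : Fin (r / 2 + 1), i < j → q i < p j)
    (P Q : Finset ℕ)
    (hP : P = Finset.image p Finset.univ) (hQ : Q = Finset.image q Finset.univ)
    (X : Finset ℕ) (hX : X ⊆ Finset.Icc 1 n \ (P ∪ Q))
    (a : ℕ) (ha : a ∈ Finset.Icc 1 n) (haX : a ∉ X ∪ P ∪ Q) (hap : p 0 < a)
    (Y : Finset ℕ) (hY : Y = insert a (X ∪ Q)) :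
    (∀ S : Finset ℕ,
      ((∃ b ∈ Q, S = insert b P) ∨ ∃ a' ∈ P, ∃ b ∈ Q, S = insert b (P.erase a')) →
      WeaklySepE r Y (X ∪ S)) ∧
    ¬ WeaklySepE r Y (X ∪ P) :=
  even_witness_Y_general r n hr p q hpq hqp P Q hP hQ X hX a haX Y hY
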